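/- Let (V,g,J) be a Hermitian vector space and let λ^pV ⊗₂ λ^qV be the space of tensors Q: λ^pV → λ^qV commuting with 𝕁 (i.e., Q∘𝕁 = 𝕁∘Q). Then the image of the total antisymmetrisation map a restricted to λ^pV ⊗₂ λ^qV is contained in λ^{p+q}V. -/

import Mathlib

noncomputable section
open scoped BigOperators RealInnerProductSpace

variable {V : Type*} [NormedAddCommGroup V] [InnerProductSpace ℝ V]

/-- Derivation extension 𝒥 of `J` acting on `p`-multilinear functions:
`(𝒥α)(v₁,…,v_p) = Σ_k α(v₁,…,Jv_k,…,v_p)`. -/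
def calJ (J : V →ₗ[ℝ] V) {p : ℕ} {W : Type*} [AddCommGroup W] [Module ℝ W]
    (α : (Fin p → V) → W) : (Fin p → V) → W :=
  fun v => ∑ k, α (Function.update v k (J (v k)))

/-- The total antisymmetrisation `a(Q)` of a tensor `Q : λ^pV → λ^qV`,
as a `(p+q)`-multilinear function. -/
def totalAlt (p q : ℕ) (Q : (Fin p → V) → AlternatingMap ℝ V ℝ (Fin q)) :
    (Fin (p + q) → V) → ℝ :=
  fun v => ∑ σ : Equiv.Perm (Fin (p + q)),
    ((Equiv.Perm.sign σ : ℤ) : ℝ) *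
      Q (fun i => v (σ (Fin.castAdd q i))) (fun j => v (σ (Fin.natAdd p j)))

section Conditions

variable (J : V →ₗ[ℝ] V)

/-- `Q` has arguments of type `λ^p`:  `𝒥²` applied in the arguments is `-p²`. -/
def ArgTypeP (p q : ℕ) (Q : AlternatingMap ℝ V (AlternatingMap ℝ V ℝ (Fin q)) (Fin p)) : Prop :=
  calJ J (calJ J ⇑Q) = (-((p : ℝ)) ^ 2) • ⇑Q

/-- `Q` has values in `λ^qV`:  each value is in the `-q²`-eigenspace of `𝒥²`. -/
def ValTypeP (p q : ℕ) (Q : AlternatingMap ℝ V (AlternatingMap ℝ V ℝ (Fin q)) (Fin p)) : Prop :=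
  ∀ v : Fin p → V, calJ J (calJ J ⇑(Q v)) = (-((q : ℝ)) ^ 2) • ⇑(Q v)

/-- `Q ∈ λ^pV ⊗₁ λ^qV`:  `𝕁` applied in the arguments equals minus `𝕁` applied to the
values, where `𝕁` acts on `λ^rV` as `r⁻¹𝒥`.  (Cleared of denominators.) -/
def AntiCommJ (p q : ℕ) (Q : AlternatingMap ℝ V (AlternatingMap ℝ V ℝ (Fin q)) (Fin p)) : Prop :=
  ∀ v : Fin p → V, (q : ℝ) • ⇑(calJ J (⇑Q) v) = (-(p : ℝ)) • calJ J ⇑(Q v)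

/-- `Q ∈ λ^pV ⊗₂ λ^qV`:  `Q` commutes with `𝕁`. -/
def CommJ (p q : ℕ) (Q : AlternatingMap ℝ V (AlternatingMap ℝ V ℝ (Fin q)) (Fin p)) : Prop :=
  ∀ v : Fin p → V, (q : ℝ) • ⇑(calJ J (⇑Q) v) = ((p : ℝ)) • calJ J ⇑(Q v)

end Conditions

/-!
`𝒥` is a derivation and commutes with permutations of the arguments, so on `a(Q)` it acts as
`a(𝒥₁Q + 𝒥₂Q)`, where `𝒥₁` and `𝒥₂` act on the arguments and on the values of `Q`. These two
commute, hence `𝒥²a(Q) = a((𝒥₁² + 2𝒥₂𝒥₁ + 𝒥₂²)Q)`. The type conditions give `𝒥₁²Q = -p²Q` and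
`𝒥₂²Q = -q²Q`, and commuting with `𝕁` means `q𝒥₁Q = p𝒥₂Q`, so `q𝒥₂𝒥₁Q = p𝒥₂²Q = -pq²Q`, i.e.
`𝒥₂𝒥₁Q = -pqQ` (for `q = 0` both sides vanish). Altogether `𝒥²a(Q) = -(p + q)²a(Q)`.
-/

section totalAltFun

variable {E : Type*}

/-- `totalAlt` with the tensor unbundled into a plain function of two blocks of arguments, so that
`calJ` can act on each block separately. -/
def totalAltFun (p q : ℕ) (R : (Fin p → E) → (Fin q → E) → ℝ) : (Fin (p + q) → E) → ℝ :=
  fun v => ∑ σ : Equiv.Perm (Fin (p + q)),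
    ((Equiv.Perm.sign σ : ℤ) : ℝ) * R (v ∘ σ ∘ Fin.castAdd q) (v ∘ σ ∘ Fin.natAdd p)

theorem smul_totalAltFun {p q : ℕ} (c : ℝ) (R : (Fin p → E) → (Fin q → E) → ℝ) :
    c • totalAltFun p q R = totalAltFun p q fun w u => c * R w u := by
  funext v
  simp only [totalAltFun, Pi.smul_apply, smul_eq_mul, Finset.mul_sum, mul_left_comm c]

end totalAltFun

theorem totalAlt_eq_totalAltFun (p q : ℕ) (Q : (Fin p → V) → AlternatingMap ℝ V ℝ (Fin q)) :
    totalAlt p q Q = totalAltFun p q fun w => ⇑(Q w) :=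
  rfl

section calJ

variable (J : V →ₗ[ℝ] V) {p q : ℕ} {W : Type*} [AddCommGroup W] [Module ℝ W]

theorem calJ_add (α β : (Fin p → V) → W) (v : Fin p → V) :
    calJ J (fun x => α x + β x) v = calJ J α v + calJ J β v :=
  Finset.sum_add_distrib

theorem calJ_smul (c : ℝ) (α : (Fin p → V) → W) (v : Fin p → V) :
    calJ J (c • α) v = c • calJ J α v :=
  (Finset.smul_sum ..).symm

theorem calJ_fin_zero (α : (Fin 0 → V) → W) (v : Fin 0 → V) : calJ J α v = 0 :=
  Finset.sum_of_isEmpty _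

theorem calJ_apply (α : (Fin p → V) → AlternatingMap ℝ V ℝ (Fin q)) (w : Fin p → V)
    (u : Fin q → V) : calJ J α w u = calJ J (fun w' => α w' u) w :=
  map_sum (AddMonoidHom.mk' (fun f : AlternatingMap ℝ V ℝ (Fin q) => f u) fun _ _ => rfl) _ _

theorem calJ_comm (R : (Fin p → V) → (Fin q → V) → W) (w : Fin p → V) (u : Fin q → V) :
    calJ J (fun u' => calJ J (fun w' => R w' u') w) u = calJ J (fun w' => calJ J (R w') u) w :=
  Finset.sum_comm

theorem calJ_comp_blocks (σ : Equiv.Perm (Fin (p + q))) (R : (Fin p → V) → (Fin q → V) → W)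
    (v : Fin (p + q) → V) :
    calJ J (fun x => R (x ∘ σ ∘ Fin.castAdd q) (x ∘ σ ∘ Fin.natAdd p)) v =
      calJ J (fun w => R w (v ∘ σ ∘ Fin.natAdd p)) (v ∘ σ ∘ Fin.castAdd q) +
        calJ J (R (v ∘ σ ∘ Fin.castAdd q)) (v ∘ σ ∘ Fin.natAdd p) := by
  have hL : Function.Injective (σ ∘ Fin.castAdd q) := σ.injective.comp (Fin.castAdd_injective _ _)
  have hR : Function.Injective (σ ∘ Fin.natAdd p) := σ.injective.comp (Fin.natAdd_injective _ _)
  have hLR (i : Fin p) (j : Fin q) : σ (Fin.castAdd q i) ≠ σ (Fin.natAdd p j) :=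
    σ.injective.ne (Fin.ne_of_lt (by simp [Fin.lt_def]; omega))
  unfold calJ
  rw [← Equiv.sum_comp σ, Fin.sum_univ_add]
  congr 1 <;> refine Finset.sum_congr rfl fun i _ => congr_arg₂ R ?_ ?_
  · exact Function.update_comp_eq_of_injective v hL i _
  · exact Function.update_comp_eq_of_forall_ne v _ fun j => (hLR i j).symm
  · exact Function.update_comp_eq_of_forall_ne v _ fun j => hLR j i
  · exact Function.update_comp_eq_of_injective v hR i _

theorem calJ_totalAltFun (R : (Fin p → V) → (Fin q → V) → ℝ) :
    calJ J (totalAltFun p q R) =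
      totalAltFun p q fun w u => calJ J (fun w' => R w' u) w + calJ J (R w) u := by
  funext v
  calc calJ J (totalAltFun p q R) v
      = ∑ σ : Equiv.Perm (Fin (p + q)), ((Equiv.Perm.sign σ : ℤ) : ℝ) *
          calJ J (fun x => R (x ∘ σ ∘ Fin.castAdd q) (x ∘ σ ∘ Fin.natAdd p)) v := by
        simp only [calJ, totalAltFun, Finset.mul_sum]
        exact Finset.sum_comm
    _ = _ := by simp only [calJ_comp_blocks]; rfl

end calJ

section TypeConditions

variable {J : V →ₗ[ℝ] V} {p q : ℕ} {Q : AlternatingMap ℝ V (AlternatingMap ℝ V ℝ (Fin q)) (Fin p)}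

theorem ArgTypeP.calJ_calJ_apply (harg : ArgTypeP J p q Q) (w : Fin p → V) (u : Fin q → V) :
    calJ J (fun w' => calJ J (fun w'' => Q w'' u) w') w = -(p : ℝ) ^ 2 * Q w u := by
  calc calJ J (fun w' => calJ J (fun w'' => Q w'' u) w') w = calJ J (calJ J ⇑Q) w u := by
        simp only [calJ_apply]
    _ = _ := by rw [harg]; rfl

theorem ValTypeP.calJ_calJ_apply (hval : ValTypeP J p q Q) (w : Fin p → V) (u : Fin q → V) :
    calJ J (calJ J ⇑(Q w)) u = -(q : ℝ) ^ 2 * Q w u :=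
  congr_fun (hval w) u

theorem CommJ.calJ_calJ_apply (hcomm : CommJ J p q Q) (hval : ValTypeP J p q Q) (w : Fin p → V)
    (u : Fin q → V) : calJ J (fun u' => calJ J (fun w' => Q w' u') w) u = -((p : ℝ) * q) * Q w u := by
  rcases eq_or_ne q 0 with rfl | hq
  · simp [calJ_fin_zero]
  apply mul_left_cancel₀ (Nat.cast_ne_zero.mpr hq : (q : ℝ) ≠ 0)
  calc (q : ℝ) * calJ J (fun u' => calJ J (fun w' => Q w' u') w) u
      = calJ J ((q : ℝ) • ⇑(calJ J ⇑Q w)) u := by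
        rw [calJ_smul, smul_eq_mul]
        congr 2
        exact funext fun u' => (calJ_apply J _ w u').symm
    _ = p * calJ J (calJ J ⇑(Q w)) u := by rw [hcomm w, calJ_smul]; rfl
    _ = _ := by rw [hval.calJ_calJ_apply]; ring

end TypeConditions

theorem totalAlt_mem_lambdaTop_of_commJ_general
    (J : V →ₗ[ℝ] V)
    (p q : ℕ) (Q : AlternatingMap ℝ V (AlternatingMap ℝ V ℝ (Fin q)) (Fin p))
    (harg : ArgTypeP J p q Q) (hval : ValTypeP J p q Q) (hcomm : CommJ J p q Q) :
    calJ J (calJ J (totalAlt p q ⇑Q)) = (-(((p : ℝ) + q) ^ 2)) • totalAlt p q ⇑Q := by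
  rw [totalAlt_eq_totalAltFun, smul_totalAltFun, calJ_totalAltFun, calJ_totalAltFun]
  congr 1
  funext w u
  simp only [calJ_add]
  rw [harg.calJ_calJ_apply, calJ_comm, hcomm.calJ_calJ_apply hval, hval.calJ_calJ_apply]
  ring

theorem totalAlt_mem_lambdaTop_of_commJ
    {n : ℕ} (hdim : Module.finrank ℝ V = 2 * n)
    (J : V →ₗ[ℝ] V) (hJ2 : ∀ v, J (J v) = -v)
    (hJg : ∀ u v : V, ⟪J u, J v⟫ = ⟪u, v⟫)
    (p q : ℕ) (Q : AlternatingMap ℝ V (AlternatingMap ℝ V ℝ (Fin q)) (Fin p))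
    (harg : ArgTypeP J p q Q) (hval : ValTypeP J p q Q) (hcomm : CommJ J p q Q) :
    calJ J (calJ J (totalAlt p q ⇑Q)) = (-(((p : ℝ) + q) ^ 2)) • totalAlt p q ⇑Q :=
  totalAlt_mem_lambdaTop_of_commJ_general J p q Q harg hval hcomm
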